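/- Let α > 0, let y : ℝ → ℝ, let t₀ ≠ 0, and set x₀ = √α/t₀, Y = y(x₀). Suppose y has derivative (−x₀³/2 + αx₀/2)·Y³ − (−3x₀²/2 + α/2 + 1)·Y² + (−3x₀/2)·Y + 1/2 at x₀ — that is, y solves the first-kind AIL representative with k₃ = −1/2, k₂ = 0, k₁ = α/2, k₀ = 0. Define u(t) = 1/t − √α·y(√α/t)/t². Then u has derivative α(1 − t₀²)·u(t₀)³/(2t₀) + (α − 1)·u(t₀)² − α·u(t₀)/(2t₀) at t₀. Hence the parameterized Class C equation y' = α(1 − x²)y³/(2x) + (α − 1)y² − αy/(2x) is a member of the AIL class. -/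

import Mathlib

/-!
By the chain rule, `u t = 1/t − s · y(s/t) / t²` has derivative `−1/t² + s² y'(s/t) / t⁴ + 2 s y(s/t) / t³`
for any `s`. Once the AIL right-hand side is substituted for `y'`, what remains is a rational identity
in `s`, `t` and `Y = y(s/t)`: for `k₃ = −1/2, k₂ = 0, k₁ = s²/2, k₀ = 0` the expression equals the
Class C right-hand side at `α = s²` and `u = 1/t − s Y / t²`.
-/

/-- Right-hand side of the first-kind AIL representative `u' = ailFirstKind k₀ k₁ k₂ k₃ x u`. -/
noncomputable def ailFirstKind (k₀ k₁ k₂ k₃ x u : ℝ) : ℝ :=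
  (k₃ * x ^ 3 - k₂ * x ^ 2 + k₁ * x - k₀) * u ^ 3 - (3 * k₃ * x ^ 2 - 2 * k₂ * x + k₁ + 1) * u ^ 2 +
    (3 * k₃ * x - k₂) * u - k₃

/-- Right-hand side of the Class C equation `y' = classC α x y`. -/
noncomputable def classC (α x y : ℝ) : ℝ :=
  α * (1 - x ^ 2) * y ^ 3 / (2 * x) + (α - 1) * y ^ 2 - α * y / (2 * x)

theorem HasDerivAt.inversion_transform {y : ℝ → ℝ} {y' s t : ℝ} (ht : t ≠ 0)
    (hy : HasDerivAt y y' (s / t)) :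
    HasDerivAt (fun t => 1 / t - s * y (s / t) / t ^ 2)
      (-1 / t ^ 2 + s ^ 2 * y' / t ^ 4 + 2 * s * y (s / t) / t ^ 3) t := by
  have hinv : HasDerivAt (fun t : ℝ => s / t) (-s / t ^ 2) t := by
    simpa [div_eq_mul_inv, neg_div] using (hasDerivAt_inv ht).const_mul s
  have hcomp : HasDerivAt (fun t => y (s / t)) (y' * (-s / t ^ 2)) t := hy.comp t hinv
  have hquot := (hcomp.const_mul s).div (hasDerivAt_pow 2 t) (pow_ne_zero 2 ht)
  have hrecip : HasDerivAt (fun t : ℝ => 1 / t) (-1 / t ^ 2) t := by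
    simpa [one_div, neg_div] using hasDerivAt_inv ht
  refine (hrecip.sub hquot).congr_deriv ?_
  field_simp
  ring

theorem ailFirstKind_inversion_eq_classC {s t u Y : ℝ} (ht : t ≠ 0)
    (hu : u = 1 / t - s * Y / t ^ 2) :
    -1 / t ^ 2 + s ^ 2 * ailFirstKind 0 (s ^ 2 / 2) 0 (-1 / 2) (s / t) Y / t ^ 4 +
      2 * s * Y / t ^ 3 = classC (s ^ 2) t u := by
  subst hu
  simp only [ailFirstKind, classC]
  field_simp
  ring

/-- The parameterized Class C equation `y' = α(1 − x²)y³/(2x) + (α − 1)y² − αy/(2x)`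
is a member of the AIL class: it is obtained from the first-kind AIL representative
with `k₃ = −1/2, k₂ = 0, k₁ = α/2, k₀ = 0` by the change of variables
`{x = √α/t, y = t(1 − tu)/√α}`, i.e. `u = 1/t − √α·y(√α/t)/t²`. -/
theorem classC_member_of_AIL
    (α : ℝ) (hα : 0 < α) (y : ℝ → ℝ) (t₀ : ℝ) (ht₀ : t₀ ≠ 0)
    (x₀ Y : ℝ) (hx₀ : x₀ = Real.sqrt α / t₀) (hY : Y = y x₀)
    (hy : HasDerivAt y
      ((-x₀ ^ 3 / 2 + α * x₀ / 2) * Y ^ 3 - (-3 * x₀ ^ 2 / 2 + α / 2 + 1) * Y ^ 2 +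
        (-3 * x₀ / 2) * Y + 1 / 2) x₀)
    (u : ℝ → ℝ)
    (hu : u = fun t => 1 / t - Real.sqrt α * y (Real.sqrt α / t) / t ^ 2) :
    HasDerivAt u
      (α * (1 - t₀ ^ 2) * (u t₀) ^ 3 / (2 * t₀) + (α - 1) * (u t₀) ^ 2 -
        α * (u t₀) / (2 * t₀)) t₀ := by
  set s := Real.sqrt α
  have hsα : s ^ 2 = α := Real.sq_sqrt hα.le
  subst hx₀
  have hAIL : HasDerivAt y (ailFirstKind 0 (s ^ 2 / 2) 0 (-1 / 2) (s / t₀) Y) (s / t₀) := by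
    convert hy using 1
    simp only [ailFirstKind, hsα]
    ring
  have hu₀ : u t₀ = 1 / t₀ - s * Y / t₀ ^ 2 := by rw [hu, hY]
  have h := hAIL.inversion_transform ht₀
  rwa [← hY, ← hu, ailFirstKind_inversion_eq_classC ht₀ hu₀, hsα] at h
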